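/- Let d ≥ 1, t > 1, and let φ: ℝ^d → ℝ be bounded and continuous. For s > 0 define the c-transform φ^c_s(y) = inf over x ∈ ℝ^d of |x−y|²/(2s) − φ(x), and write φ^c = φ^c_1. Then for every x ∈ ℝ^d, −[φ^c_t]^c(x) ≤ φ^c_{t−1}(x). -/

import Mathlib

/-!
Completing the square shows `(a + b)² / (p + q) ≤ a² / p + b² / q`; with the triangle inequality
this splits the cost of moving from `z` to `y` in time `s + r` into moving from `z` to `x` in time
`s` and from `x` to `y` in time `r`. Hence `φ^c_{s+r}(y) ≤ φ^c_s(x) + ‖y - x‖² / (2r)`, and for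
`s = t - 1`, `r = 1` this is exactly `-[φ^c_t]^c(x) ≤ φ^c_{t-1}(x)` after taking the supremum in `y`.
-/

noncomputable section

abbrev EucSp (d : ℕ) := EuclideanSpace ℝ (Fin d)

/-- The `c`-transform with quadratic cost rescaled by `2s`:
`φ^c_s(y) = inf_x (|x-y|²/(2s) - φ(x))`. -/
noncomputable def ctrans {d : ℕ} (s : ℝ) (φ : EucSp d → ℝ) (y : EucSp d) : ℝ :=
  ⨅ x : EucSp d, (‖x - y‖ ^ 2 / (2 * s) - φ x)

open Set

theorem add_sq_div_add_le {a b p q : ℝ} (hp : 0 < p) (hq : 0 < q) :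
    (a + b) ^ 2 / (p + q) ≤ a ^ 2 / p + b ^ 2 / q := by
  rw [div_add_div _ _ hp.ne' hq.ne', div_le_div_iff₀ (by positivity) (by positivity)]
  nlinarith [sq_nonneg (a * q - b * p), mul_pos hp hq]

theorem norm_sub_sq_div_add_le {E : Type*} [SeminormedAddCommGroup E] (x y z : E) {s r : ℝ}
    (hs : 0 < s) (hr : 0 < r) :
    ‖z - y‖ ^ 2 / (2 * (s + r)) ≤ ‖z - x‖ ^ 2 / (2 * s) + ‖y - x‖ ^ 2 / (2 * r) := by
  have htri : ‖z - y‖ ≤ ‖z - x‖ + ‖y - x‖ := by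
    simpa only [norm_sub_rev x y] using norm_sub_le_norm_sub_add_norm_sub z x y
  calc ‖z - y‖ ^ 2 / (2 * (s + r))
      ≤ (‖z - x‖ + ‖y - x‖) ^ 2 / (2 * s + 2 * r) := by
        rw [mul_add]
        gcongr
    _ ≤ ‖z - x‖ ^ 2 / (2 * s) + ‖y - x‖ ^ 2 / (2 * r) :=
        add_sq_div_add_le (by positivity) (by positivity)

section CTransform

variable {d : ℕ} {φ : EucSp d → ℝ}

theorem bddBelow_range_ctrans {s : ℝ} (hs : 0 ≤ s) (hφ : BddAbove (range φ)) (y : EucSp d) :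
    BddBelow (range fun x : EucSp d => ‖x - y‖ ^ 2 / (2 * s) - φ x) := by
  obtain ⟨M, hM⟩ := hφ
  refine ⟨-M, forall_mem_range.2 fun x => ?_⟩
  have hφx : φ x ≤ M := hM (mem_range_self x)
  have : 0 ≤ ‖x - y‖ ^ 2 / (2 * s) := by positivity
  linarith

theorem ctrans_le {s : ℝ} (hs : 0 ≤ s) (hφ : BddAbove (range φ)) (x y : EucSp d) :
    ctrans s φ y ≤ ‖x - y‖ ^ 2 / (2 * s) - φ x :=
  ciInf_le (bddBelow_range_ctrans hs hφ y) x

theorem le_ctrans {s c : ℝ} {y : EucSp d} (h : ∀ x, c ≤ ‖x - y‖ ^ 2 / (2 * s) - φ x) :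
    c ≤ ctrans s φ y :=
  le_ciInf h

/-- The Hopf–Lax semigroup inequality. -/
theorem ctrans_add_le {s r : ℝ} (hs : 0 < s) (hr : 0 < r) (hφ : BddAbove (range φ))
    (x y : EucSp d) :
    ctrans (s + r) φ y ≤ ctrans s φ x + ‖y - x‖ ^ 2 / (2 * r) := by
  suffices ctrans (s + r) φ y - ‖y - x‖ ^ 2 / (2 * r) ≤ ctrans s φ x by linarith
  refine le_ctrans fun z => ?_
  have hz := ctrans_le (s := s + r) (by positivity) hφ z y
  have hsplit := norm_sub_sq_div_add_le x y z hs hr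
  linarith

end CTransform

theorem stmt_6_general {d : ℕ} {t : ℝ} (ht : 1 < t)
    (φ : EucSp d → ℝ) (hbdd : ∃ M : ℝ, ∀ x, |φ x| ≤ M) :
    ∀ x : EucSp d, -(ctrans 1 (ctrans t φ) x) ≤ ctrans (t - 1) φ x := by
  obtain ⟨M, hM⟩ := hbdd
  have hφ : BddAbove (range φ) := ⟨M, forall_mem_range.2 fun x => le_of_abs_le (hM x)⟩
  intro x
  rw [neg_le]
  refine le_ctrans fun y => ?_
  have h := ctrans_add_le (sub_pos.2 ht) one_pos hφ x y
  rw [sub_add_cancel] at h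
  linarith

/-- `-[φ^c_t]^c ≤ φ^c_{t-1}` pointwise. -/
theorem stmt_6 {d : ℕ} (hd : 1 ≤ d) {t : ℝ} (ht : 1 < t)
    (φ : EucSp d → ℝ) (hcont : Continuous φ) (hbdd : ∃ M : ℝ, ∀ x, |φ x| ≤ M) :
    ∀ x : EucSp d, -(ctrans 1 (ctrans t φ) x) ≤ ctrans (t - 1) φ x :=
  stmt_6_general ht φ hbdd
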